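/- For every n ≥ 0, the number of partitions of n in which each part appears at most three times equals the coefficient of q^n in Σ_{m,k≥0} q^{2·C(m+1,2)+C(k+1,2)+mk} / ((q;q)_m (q;q)_k). -/

import Mathlib

noncomputable section

/-- The coefficient-wise (product) topology on `ℚ[[q]]`, so that the infinite
sums and products of formal power series below make sense. -/
instance : TopologicalSpace (PowerSeries ℚ) :=
  TopologicalSpace.induced (fun f => fun n => (PowerSeries.coeff n) f) inferInstance

/-- The formal variable `q`. -/
def q : PowerSeries ℚ := PowerSeries.X

/-- The finite q-Pochhammer symbol `(a; b)_n = ∏_{j=1}^n (1 - a b^(j-1))`. -/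
def poch (a b : PowerSeries ℚ) (n : ℕ) : PowerSeries ℚ :=
  ∏ j ∈ Finset.range n, (1 - a * b ^ j)

/-- The infinite q-Pochhammer symbol `(a; b)_∞ = ∏_{j≥1} (1 - a b^(j-1))`. -/
def pochInf (a b : PowerSeries ℚ) : PowerSeries ℚ := ∏' j : ℕ, (1 - a * b ^ j)

/-- The number of partitions of `n` (multisets of positive integers summing to
`n`) in which each part appears at most three times. -/
def p3 (n : ℕ) : ℕ :=
  Nat.card {μ : Multiset ℕ //
    (∀ a ∈ μ, 0 < a) ∧ μ.sum = n ∧ ∀ a, μ.count a ≤ 3}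

/-!
Summing over `k` first, Euler's identity
`∑_k a^(c k + C(k+1,2)) / (a;a)_k = ∏_{j>c} (1 + a^j)` turns the `m`-th row into
`q^(m(m+1)) (-q^(m+1);q)_∞ / (q;q)_m`, and since `(q;q)_m (-q;q)_m = (q²;q²)_m` this is
`q^(m(m+1)) / (q²;q²)_m · (-q;q)_∞`. Euler's identity in base `q²` then sums the rows to
`∏_{j≥1} (1 + q^j)(1 + q^(2j)) = ∏_{j≥1} (1 + q^j + q^(2j) + q^(3j))`, the generating
function of partitions in which no part occurs more than three times.

Euler's identity itself comes from the functional equation `E_c = (1 + a^(c+1)) E_(c+1)` of its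
left-hand side `E_c`, together with `E_c → 1` as `c → ∞`.
-/

namespace PartitionsAtMostThree

open PowerSeries Finset Filter Topology
open scoped PowerSeries

-- The scoped product-topology instance of Mathlib does not take precedence over the global
-- instance on `ℚ⟦X⟧` fixed above, so the two are identified once and for all here.
theorem instTopologicalSpace_eq_piTopology :
    (inferInstance : TopologicalSpace ℚ⟦X⟧) = WithPiTopology.instTopologicalSpace ℚ := by
  let coeffs : ℚ⟦X⟧ → ℕ → ℚ := fun f n => coeff n f
  apply le_antisymm
  · rw [← continuous_id_iff_le]
    refine continuous_pi fun d => ?_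
    have hd : d = Finsupp.single () (d ()) := by ext; simp
    have : (fun f : ℚ⟦X⟧ => id f d) = fun f => coeffs f (d ()) :=
      funext fun f => congrArg f hd
    rw [this]
    exact (continuous_apply (d ())).comp (continuous_induced_dom (f := coeffs))
  · exact continuous_iff_le_induced.1 <|
      @continuous_pi _ _ _ (WithPiTopology.instTopologicalSpace ℚ) _ coeffs
        fun n => WithPiTopology.continuous_coeff ℚ n

theorem p3_eq_card_countRestricted (n : ℕ) :
    p3 n = #(Nat.Partition.countRestricted n 4) := by
  rw [p3, ← Nat.card_eq_finsetCard]
  refine Nat.card_congr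
    { toFun := fun μ => ⟨⟨μ.1, μ.2.1 _, μ.2.2.1⟩, ?_⟩
      invFun := fun p => ⟨p.1.parts, fun _ => p.1.parts_pos, p.1.parts_sum, fun a => ?_⟩
      left_inv := fun _ => rfl
      right_inv := fun _ => rfl }
  · simpa [Nat.Partition.countRestricted, Nat.lt_succ_iff] using fun a _ => μ.2.2.2 a
  · have hp := p.2
    simp only [Nat.Partition.countRestricted, mem_filter, mem_univ, true_and] at hp
    by_cases ha : a ∈ p.1.parts
    · exact Nat.lt_succ_iff.1 (hp a ha)
    · simp [Multiset.count_eq_zero.2 ha]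

theorem le_succ_choose_two (k : ℕ) : k ≤ (k + 1).choose 2 := by
  rw [Nat.choose_succ_succ, Nat.choose_one_right]
  omega

open scoped PowerSeries.WithPiTopology

theorem summable_of_finite_setOf_order_le {R ι : Type*} [Semiring R] [TopologicalSpace R]
    {f : ι → R⟦X⟧} (h : ∀ n : ℕ, {i | (f i).order ≤ n}.Finite) : Summable f := by
  refine (WithPiTopology.summable_iff_summable_coeff R).2 fun n => ?_
  refine summable_of_hasFiniteSupport ((h n).subset fun i hi => ?_)
  by_contra hlt
  exact hi (coeff_of_lt_order n (not_le.1 hlt))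

section Field

variable {K : Type*} [Field K]

theorem natCast_le_order_pow_mul {a : K⟦X⟧} (ha : constantCoeff a = 0) (n : ℕ)
    (φ : K⟦X⟧) :
    (n : ℕ∞) ≤ (a ^ n * φ).order :=
  (le_order_pow_of_constantCoeff_eq_zero n ha).trans <| le_self_add.trans (le_order_mul _ _)

/-- `(a; a)_k`, that is, `poch a a k` over an arbitrary field. -/
def qPoch (a : K⟦X⟧) (k : ℕ) : K⟦X⟧ := ∏ j ∈ range k, (1 - a ^ (j + 1))

theorem poch_self (a : ℚ⟦X⟧) (k : ℕ) : poch a a k = qPoch a k :=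
  prod_congr rfl fun j _ => by rw [pow_succ']

theorem qPoch_succ (a : K⟦X⟧) (k : ℕ) : qPoch a (k + 1) = qPoch a k * (1 - a ^ (k + 1)) :=
  prod_range_succ _ _

theorem qPoch_sq (a : K⟦X⟧) (k : ℕ) :
    qPoch (a ^ 2) k = qPoch a k * ∏ j ∈ range k, (1 + a ^ (j + 1)) := by
  rw [qPoch, qPoch, ← prod_mul_distrib]
  exact prod_congr rfl fun j _ => by ring

def eulerTerm (a : K⟦X⟧) (c k : ℕ) : K⟦X⟧ :=
  a ^ (c * k + (k + 1).choose 2) * (qPoch a k)⁻¹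

theorem eulerTerm_zero (a : K⟦X⟧) (c : ℕ) : eulerTerm a c 0 = 1 := by
  simp [eulerTerm, qPoch]

theorem eulerTerm_succ {a : K⟦X⟧} (ha : constantCoeff a = 0) (c k : ℕ) :
    eulerTerm a c (k + 1) =
      eulerTerm a (c + 1) (k + 1) + a ^ (c + 1) * eulerTerm a (c + 1) k := by
  have hunit : (1 - a ^ (k + 1)) * (1 - a ^ (k + 1))⁻¹ = 1 :=
    PowerSeries.mul_inv_cancel _ (by simp [ha])
  have hinv : (qPoch a k)⁻¹ = (1 - a ^ (k + 1)) * (qPoch a (k + 1))⁻¹ := by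
    rw [qPoch_succ, PowerSeries.mul_inv_rev, ← mul_assoc, hunit, one_mul]
  have hchoose : (k + 2).choose 2 = (k + 1) + (k + 1).choose 2 := by
    simp [Nat.choose_succ_succ (k + 1) 1]
  simp only [eulerTerm, hinv, hchoose]
  set N := (k + 1).choose 2
  rw [show c * (k + 1) + (k + 1 + N) = (c + 1) * k + N + (c + 1) by ring,
    show (c + 1) * (k + 1) + (k + 1 + N) = (c + 1) * k + N + (c + 1) + (k + 1) by ring]
  ring

def doubleSeriesTerm (a : K⟦X⟧) (p : ℕ × ℕ) : K⟦X⟧ :=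
  a ^ (2 * (p.1 + 1).choose 2 + (p.2 + 1).choose 2 + p.1 * p.2) *
    (qPoch a p.1)⁻¹ * (qPoch a p.2)⁻¹

theorem doubleSeriesTerm_eq_mul_eulerTerm (a : K⟦X⟧) (m k : ℕ) :
    doubleSeriesTerm a (m, k) =
      (a ^ 2) ^ (m + 1).choose 2 * (qPoch a m)⁻¹ * eulerTerm a m k := by
  rw [doubleSeriesTerm, eulerTerm, ← pow_mul, add_assoc, add_comm ((k + 1).choose 2), pow_add]
  ring

section Topological

variable [TopologicalSpace K]

theorem summable_eulerTerm {a : K⟦X⟧} (ha : constantCoeff a = 0) (c : ℕ) :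
    Summable (eulerTerm a c) := by
  refine summable_of_finite_setOf_order_le fun n => (Set.finite_Iic n).subset fun k hk => ?_
  have hk' : ((c * k + (k + 1).choose 2 : ℕ) : ℕ∞) ≤ n :=
    (natCast_le_order_pow_mul ha _ _).trans hk
  norm_cast at hk'
  have := le_succ_choose_two k
  exact (this.trans le_add_self).trans hk'

theorem summable_doubleSeriesTerm {a : K⟦X⟧} (ha : constantCoeff a = 0) :
    Summable (doubleSeriesTerm a) := by
  refine summable_of_finite_setOf_order_le fun n =>
    ((Set.finite_Iic n).prod (Set.finite_Iic n)).subset fun p hp => ?_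
  obtain ⟨m, k⟩ := p
  have hord : ((2 * (m + 1).choose 2 + (k + 1).choose 2 + m * k : ℕ) : ℕ∞) ≤ n := by
    refine le_trans ?_ hp
    rw [doubleSeriesTerm, mul_assoc]
    exact natCast_le_order_pow_mul ha _ _
  norm_cast at hord
  have := le_succ_choose_two m
  have := le_succ_choose_two k
  simp only [Set.mem_prod, Set.mem_Iic]
  omega

theorem multipliable_one_add_pow {a : K⟦X⟧} (ha : constantCoeff a = 0) (c : ℕ) :
    Multipliable fun j => 1 + a ^ (j + c + 1) := by
  refine WithPiTopology.multipliable_one_add_of_tendsto_order_atTop_nhds_top K ?_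
  refine ENat.tendsto_nhds_top_iff_natCast_lt.2 fun n => eventually_atTop.2 ⟨n, fun j hj => ?_⟩
  refine lt_of_lt_of_le ?_ (le_order_pow_of_constantCoeff_eq_zero _ ha)
  norm_cast
  omega

variable [T2Space K]

theorem tendsto_tsum_eulerTerm {a : K⟦X⟧} (ha : constantCoeff a = 0) :
    Tendsto (fun c => ∑' k, eulerTerm a c k) atTop (𝓝 1) := by
  rw [WithPiTopology.tendsto_iff_coeff_tendsto]
  intro d
  refine tendsto_const_nhds.congr' (eventually_atTop.2 ⟨d + 1, fun c hc => ?_⟩)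
  dsimp only
  rw [← ((WithPiTopology.hasSum_iff_hasSum_coeff K).1 (summable_eulerTerm ha c).hasSum d).tsum_eq,
    tsum_eq_single 0, eulerTerm_zero]
  intro k hk
  apply coeff_of_lt_order
  refine lt_of_lt_of_le ?_ (natCast_le_order_pow_mul ha _ _)
  norm_cast
  nlinarith [Nat.pos_of_ne_zero hk]

variable [IsTopologicalRing K]

theorem tsum_eulerTerm_eq_mul {a : K⟦X⟧} (ha : constantCoeff a = 0) (c : ℕ) :
    ∑' k, eulerTerm a c k = (1 + a ^ (c + 1)) * ∑' k, eulerTerm a (c + 1) k := by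
  have hsum := summable_eulerTerm ha (c + 1)
  rw [(summable_eulerTerm ha c).tsum_eq_zero_add, hsum.tsum_eq_zero_add]
  simp only [eulerTerm_zero, eulerTerm_succ ha c]
  rw [((summable_nat_add_iff 1).2 hsum).tsum_add (hsum.mul_left _), hsum.tsum_mul_left,
    hsum.tsum_eq_zero_add, eulerTerm_zero]
  ring

theorem tsum_eulerTerm_eq_prod_mul {a : K⟦X⟧} (ha : constantCoeff a = 0) (c m : ℕ) :
    ∑' k, eulerTerm a c k =
      (∏ j ∈ range m, (1 + a ^ (j + c + 1))) * ∑' k, eulerTerm a (m + c) k := by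
  induction m with
  | zero => simp
  | succ m ih =>
    rw [ih, tsum_eulerTerm_eq_mul ha, prod_range_succ, mul_assoc, Nat.succ_add]

theorem hasSum_eulerTerm {a : K⟦X⟧} (ha : constantCoeff a = 0) (c : ℕ) :
    HasSum (eulerTerm a c) (∏' j, (1 + a ^ (j + c + 1))) := by
  have hlim := ((multipliable_one_add_pow ha c).hasProd.tendsto_prod_nat).mul
    ((tendsto_tsum_eulerTerm ha).comp (tendsto_add_atTop_nat c))
  simp only [Function.comp_def, ← tsum_eulerTerm_eq_prod_mul ha, mul_one] at hlim
  rw [← tendsto_nhds_unique tendsto_const_nhds hlim]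
  exact (summable_eulerTerm ha c).hasSum

theorem inv_qPoch_mul_tprod {a : K⟦X⟧} (ha : constantCoeff a = 0) (m : ℕ) :
    (qPoch a m)⁻¹ * ∏' j, (1 + a ^ (j + m + 1)) =
      (qPoch (a ^ 2) m)⁻¹ * ∏' j, (1 + a ^ (j + 1)) := by
  set P := ∏ j ∈ range m, (1 + a ^ (j + 1)) with hP_def
  have hP : P⁻¹ * P = 1 := PowerSeries.inv_mul_cancel _ (by simp [hP_def, ha])
  have hsplit := Multipliable.prod_mul_tprod_nat_mul' (f := fun j => 1 + a ^ (j + 1))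
    (multipliable_one_add_pow ha m)
  rw [qPoch_sq, PowerSeries.mul_inv_rev, ← hsplit]
  linear_combination (-(qPoch a m)⁻¹ * ∏' j, (1 + a ^ (j + m + 1))) * hP

theorem hasSum_doubleSeriesTerm_fiber {a : K⟦X⟧} (ha : constantCoeff a = 0) (m : ℕ) :
    HasSum (fun k => doubleSeriesTerm a (m, k))
      (eulerTerm (a ^ 2) 0 m * ∏' j, (1 + a ^ (j + 1))) := by
  have h := (hasSum_eulerTerm ha m).mul_left ((a ^ 2) ^ (m + 1).choose 2 * (qPoch a m)⁻¹)
  rw [mul_assoc, inv_qPoch_mul_tprod ha] at h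
  rw [funext (doubleSeriesTerm_eq_mul_eulerTerm a m), eulerTerm, zero_mul, zero_add, mul_assoc]
  exact h

theorem hasSum_doubleSeriesTerm {a : K⟦X⟧} (ha : constantCoeff a = 0) :
    HasSum (doubleSeriesTerm a)
      ((∏' j, (1 + (a ^ 2) ^ (j + 1))) * ∏' j, (1 + a ^ (j + 1))) := by
  have ha2 : constantCoeff (a ^ 2) = 0 := by simp [ha]
  have hsum := summable_doubleSeriesTerm ha
  have hfib := hsum.hasSum.prod_fiberwise (hasSum_doubleSeriesTerm_fiber ha)
  have hEuler := (hasSum_eulerTerm ha2 0).mul_right (∏' j, (1 + a ^ (j + 1)))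
  simp only [add_zero] at hEuler
  rw [hEuler.unique hfib]
  exact hsum.hasSum

theorem tsum_doubleSeriesTerm_X :
    ∑' p, doubleSeriesTerm (X : K⟦X⟧) p =
      PowerSeries.mk fun n => (#(Nat.Partition.countRestricted n 4) : K) := by
  have hX : constantCoeff (X : K⟦X⟧) = 0 := constantCoeff_X
  have hX2 : constantCoeff ((X : K⟦X⟧) ^ 2) = 0 := by simp
  have hfactor (i : ℕ) : (1 + ((X : K⟦X⟧) ^ 2) ^ (i + 1)) * (1 + X ^ (i + 1)) =
      ∑ j ∈ range 4, X ^ ((i + 1) * j) := by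
    simp only [sum_range_succ, sum_range_zero, ← pow_mul]
    ring
  have hprod :=
    (multipliable_one_add_pow hX2 0).hasProd.mul (multipliable_one_add_pow hX 0).hasProd
  simp only [add_zero, hfactor] at hprod
  rw [(hasSum_doubleSeriesTerm hX).tsum_eq]
  exact hprod.unique (Nat.Partition.hasProd_powerSeriesMk_card_countRestricted K (by norm_num))

end Topological

end Field

end PartitionsAtMostThree

theorem partitions_at_most_three_eq_coeff (n : ℕ) :
    (p3 n : ℚ)
      = PowerSeries.coeff n
          (∑' p : ℕ × ℕ,
            q ^ (2 * (p.1+1).choose 2 + (p.2+1).choose 2 + p.1 * p.2)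
              * (poch q q p.1)⁻¹ * (poch q q p.2)⁻¹) := by
  open PartitionsAtMostThree in
  have key := congrArg (PowerSeries.coeff n) (tsum_doubleSeriesTerm_X (K := ℚ))
  rw [PowerSeries.coeff_mk, ← p3_eq_card_countRestricted] at key
  simp only [q, poch_self]
  rw [← key]
  exact congrArg (fun t => PowerSeries.coeff n (@tsum _ _ _ t _ _))
    instTopologicalSpace_eq_piTopology.symm
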